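/- Let x ∈ gl₆(𝕂) be the matrix whose only possibly nonzero entries are x₁₃ = x₃₁ = a, x₂₂ = w, x₄₄ = 1, x₅₆ = 1, x₆₅ = 1, and x₆₆ = b (for some a, w, b ∈ 𝕂). Then for all s, s' ∈ Lie(S₄,₂), the (1,3) entry of s·x + x·s'^τ equals its (3,1) entry; in particular, tr((s·x + x·s'^τ)·(e₁₃ − e₃₁)) = 0, where e_{ij} is the matrix with 1 at position (i,j) and 0 elsewhere. -/

import Mathlib

open Matrix

/-- Assembles a `3 × 3` grid of `2 × 2` blocks into a `6 × 6` matrix. -/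
def asm {𝕂 : Type*} [RCLike 𝕂] (m : Matrix (Fin 3) (Fin 3) (Matrix (Fin 2) (Fin 2) 𝕂)) :
    Matrix (Fin 6) (Fin 6) 𝕂 :=
  Matrix.of fun i j =>
    m ⟨(i : ℕ) / 2, by have := i.2; omega⟩ ⟨(j : ℕ) / 2, by have := j.2; omega⟩
      ⟨(i : ℕ) % 2, by omega⟩ ⟨(j : ℕ) % 2, by omega⟩

/-- The Lie algebra `Lie(S₄,₂)` of matrices of the block form `[[α,β,0],[0,α,0],[0,0,α]]`
with `α, β ∈ gl₂(𝕂)`. -/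
def LieS42 (𝕂 : Type*) [RCLike 𝕂] : Set (Matrix (Fin 6) (Fin 6) 𝕂) :=
  {m | ∃ α β : Matrix (Fin 2) (Fin 2) 𝕂, m = asm !![α, β, 0; 0, α, 0; 0, 0, α]}

/-! The `(1,3)` and `(3,1)` entries of `s·x` only see `x₃₁`, `x₁₃` and the diagonal entries
`s₁₁`, `s₃₃` (likewise for `x·s'^τ`), because rows and columns 1 and 3 of `x` vanish outside
those two entries. Since `x₁₃ = x₃₁` and every element of `Lie(S₄,₂)` repeats the diagonal block
`α`, so that `s₁₁ = s₃₃`, the two entries agree. -/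

section

variable {n R : Type*} [Fintype n]

theorem trace_mul_single_sub_single [DecidableEq n] [CommRing R] (M : Matrix n n R) (i j : n) :
    trace (M * (single i j 1 - single j i 1)) = M j i - M i j := by
  simp [mul_sub, trace_sub, trace_mul_single]

theorem mul_apply_eq_of_col_eq_zero [NonUnitalNonAssocSemiring R] {s x : Matrix n n R}
    {i j : n} (hcol : ∀ k ≠ i, x k j = 0) (l : n) : (s * x) l j = s l i * x i j :=
  Finset.sum_eq_single i (fun k _ hk => by simp [hcol k hk]) (by simp)

theorem mul_transpose_apply_eq_of_row_eq_zero [NonUnitalNonAssocSemiring R] {x y : Matrix n n R}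
    {i j : n} (hrow : ∀ k ≠ j, x i k = 0) (l : n) : (x * yᵀ) i l = x i j * y l j :=
  Finset.sum_eq_single j (fun k _ hk => by simp [hrow k hk]) (by simp)

theorem add_mul_transpose_apply_comm [CommSemiring R] {s s' x : Matrix n n R} {i j : n}
    (hx : x i j = x j i) (hs : s i i = s j j) (hs' : s' i i = s' j j)
    (hi : ∀ k ≠ j, x i k = 0 ∧ x k i = 0) (hj : ∀ k ≠ i, x j k = 0 ∧ x k j = 0) :
    (s * x + x * s'ᵀ) i j = (s * x + x * s'ᵀ) j i := by
  rw [Matrix.add_apply, Matrix.add_apply, mul_apply_eq_of_col_eq_zero (fun k hk => (hj k hk).2),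
    mul_apply_eq_of_col_eq_zero (fun k hk => (hi k hk).2),
    mul_transpose_apply_eq_of_row_eq_zero (fun k hk => (hi k hk).1),
    mul_transpose_apply_eq_of_row_eq_zero (fun k hk => (hj k hk).1), hx, hs, hs']

end

theorem LieS42.apply_zero_zero_eq_apply_two_two {𝕂 : Type*} [RCLike 𝕂] {s : Matrix (Fin 6) (Fin 6) 𝕂}
    (hs : s ∈ LieS42 𝕂) : s 0 0 = s 2 2 := by
  obtain ⟨α, β, rfl⟩ := hs
  rfl

def tangentPoint {R : Type*} [Semiring R] (a w b : R) : Matrix (Fin 6) (Fin 6) R :=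
  a • single 0 2 1 + a • single 2 0 1 + w • single 1 1 1 + single 3 3 1
    + single 4 5 1 + single 5 4 1 + b • single 5 5 1

section

variable {R : Type*} [Semiring R] (a w b : R)

theorem tangentPoint_apply_zero_two : tangentPoint a w b 0 2 = tangentPoint a w b 2 0 := by
  simp [tangentPoint]

theorem tangentPoint_row_col_zero :
    ∀ k ≠ 2, tangentPoint a w b 0 k = 0 ∧ tangentPoint a w b k 0 = 0 := by
  intro k hk
  fin_cases k <;> simp_all [tangentPoint]

theorem tangentPoint_row_col_two :
    ∀ k ≠ 0, tangentPoint a w b 2 k = 0 ∧ tangentPoint a w b k 2 = 0 := by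
  intro k hk
  fin_cases k <;> simp_all [tangentPoint]

end

theorem tangent_entries_symmetric {𝕂 : Type*} [RCLike 𝕂] (a w b : 𝕂)
    (x : Matrix (Fin 6) (Fin 6) 𝕂)
    (hx : x = a • Matrix.single 0 2 (1 : 𝕂) + a • Matrix.single 2 0 (1 : 𝕂)
      + w • Matrix.single 1 1 (1 : 𝕂) + Matrix.single 3 3 (1 : 𝕂)
      + Matrix.single 4 5 (1 : 𝕂) + Matrix.single 5 4 (1 : 𝕂)
      + b • Matrix.single 5 5 (1 : 𝕂)) :
    ∀ s ∈ LieS42 𝕂, ∀ s' ∈ LieS42 𝕂,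
      (s * x + x * s'ᵀ) 0 2 = (s * x + x * s'ᵀ) 2 0 ∧
      Matrix.trace ((s * x + x * s'ᵀ) *
        (Matrix.single 0 2 (1 : 𝕂) - Matrix.single 2 0 (1 : 𝕂))) = 0 := by
  intro s hs s' hs'
  obtain rfl : x = tangentPoint a w b := hx
  have hsym := add_mul_transpose_apply_comm (tangentPoint_apply_zero_two a w b)
    (LieS42.apply_zero_zero_eq_apply_two_two hs) (LieS42.apply_zero_zero_eq_apply_two_two hs')
    (tangentPoint_row_col_zero a w b) (tangentPoint_row_col_two a w b)
  exact ⟨hsym, by rw [trace_mul_single_sub_single, hsym, sub_self]⟩
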